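/- arXiv:math/0101085 — 3 statements merged into one kernel-verified Lean document; each statement's English description precedes it below -/
import Mathlib

section
/- Let X : ℝ^m → ℝ^m be a continuous vector field and G : ℝ^m → ℝ a differentiable function such that the derivative of G in the direction of X is strictly negative away from the origin: dG_x(X(x)) < 0 for every x ≠ 0. Then every periodic solution of the system γ'(t) = X(γ(t)) is constant. -/
/-- **A Lyapunov function excludes nonconstant periodic orbits.**  If `X : ℝ^m → ℝ^m`
is a continuous vector field and `G : ℝ^m → ℝ` a differentiable function whose
derivative in the direction of `X` is strictly negative away from the origin, then
every periodic solution of `γ' = X(γ)` is constant. -/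
theorem periodic_solution_constant_of_strict_lyapunov
    (m : ℕ) (X : (Fin m → ℝ) → (Fin m → ℝ)) (hX : Continuous X)
    (G : (Fin m → ℝ) → ℝ) (hG : Differentiable ℝ G)
    (hdec : ∀ x : Fin m → ℝ, x ≠ 0 → fderiv ℝ G x (X x) < 0)
    (γ : ℝ → (Fin m → ℝ)) (hγ : ∀ t : ℝ, HasDerivAt γ (X (γ t)) t)
    (T : ℝ) (hT : 0 < T) (hper : ∀ t : ℝ, γ (t + T) = γ t) :
    ∃ c : Fin m → ℝ, ∀ t : ℝ, γ t = c := by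
  set g : ℝ → ℝ := fun t => G (γ t) with hg_def
  have hgper : Function.Periodic g T := fun t => by simp [hg_def, hper t]
  have hg' : ∀ t, HasDerivAt g (fderiv ℝ G (γ t) (X (γ t))) t := fun t =>
    ((hG (γ t)).hasFDerivAt).comp_hasDerivAt t (hγ t)
  have hgc : Continuous g := hG.continuous.comp (continuous_iff_continuousAt.mpr fun t => (hγ t).continuousAt)
  -- if g has derivative 0 at t, then γ t = 0
  have hzero : ∀ t, fderiv ℝ G (γ t) (X (γ t)) = 0 → γ t = 0 := by
    intro t h
    by_contra hne
    exact absurd h (ne_of_lt (hdec _ hne))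
  -- global max and min on [0,T]
  obtain ⟨t₁, ht₁, hmax⟩ := isCompact_Icc.exists_isMaxOn (Set.nonempty_Icc.2 hT.le)
    (hgc.continuousOn : ContinuousOn g (Set.Icc 0 T))
  obtain ⟨t₂, ht₂, hmin⟩ := isCompact_Icc.exists_isMinOn (Set.nonempty_Icc.2 hT.le)
    (hgc.continuousOn : ContinuousOn g (Set.Icc 0 T))
  have hglobmax : ∀ s, g s ≤ g t₁ := by
    intro s
    obtain ⟨y, hy, hyeq⟩ := hgper.exists_mem_Ico₀ hT s
    rw [hyeq]
    exact hmax (Set.Ico_subset_Icc_self hy)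
  have hglobmin : ∀ s, g t₂ ≤ g s := by
    intro s
    obtain ⟨y, hy, hyeq⟩ := hgper.exists_mem_Ico₀ hT s
    rw [hyeq]
    exact hmin (Set.Ico_subset_Icc_self hy)
  have hmax0 : γ t₁ = 0 := by
    apply hzero
    exact (IsLocalMax.hasDerivAt_eq_zero (isMaxOn_univ_iff.mpr hglobmax
      |>.isLocalMax Filter.univ_mem) (hg' t₁))
  have hmin0 : γ t₂ = 0 := by
    apply hzero
    exact (IsLocalMin.hasDerivAt_eq_zero (isMinOn_univ_iff.mpr hglobmin
      |>.isLocalMin Filter.univ_mem) (hg' t₂))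
  have hconst : ∀ s, g s = G 0 := by
    intro s
    have h1 := hglobmax s
    have h2 := hglobmin s
    rw [hg_def] at h1 h2
    simp only [hmax0] at h1
    simp only [hmin0] at h2
    exact le_antisymm h1 h2
  refine ⟨0, fun t => ?_⟩
  apply hzero
  have : IsLocalMax g t := by
    filter_upwards with s
    rw [hconst s, hconst t]
  exact this.hasDerivAt_eq_zero (hg' t)
end

section
/- Consider Moser's Hamiltonian H : ℂ² → ℝ, H(z₁, z₂) = ½(|z₁|² − |z₂|²) + (|z₁|² + |z₂|²)·Re(z₁z₂), with Hamiltonian system ż₁ = −i z₁ − 2i z₁ Re(z₁z₂) − i(|z₁|² + |z₂|²) z̄₂ and ż₂ = i z₂ − 2i z₂ Re(z₁z₂) − i(|z₁|² + |z₂|²) z̄₁. Along any solution (z₁(t), z₂(t)) of this system, the function G(z₁, z₂) = Im(z₁z₂) satisfies the identity d/dt [Im(z₁(t)z₂(t))] = −4(Re(z₁(t)z₂(t)))² − (|z₁(t)|² + |z₂(t)|²)², which is strictly negative whenever (z₁(t), z₂(t)) ≠ (0,0). -/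
/-! Writing `w = z₁z₂` and `N = |z₁|² + |z₂|²`, the product rule and `z z̄ = |z|²` give
`ẇ = ż₁z₂ + z₁ż₂ = -i (4 w Re w + N²)`: the linear terms `∓ i z₁z₂` cancel. Taking imaginary
parts, `d/dt Im w = -4 (Re w)² - N²`, and `N > 0` away from the origin. -/

open Complex ComplexConjugate

theorem Complex.sq_norm_add_sq_norm_pos {a b : ℂ} (h : (a, b) ≠ (0, 0)) : 0 < ‖a‖ ^ 2 + ‖b‖ ^ 2 := by
  rcases eq_or_ne a 0 with rfl | ha
  · have hb : b ≠ 0 := by simpa using h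
    positivity
  · positivity

namespace Moser

noncomputable def velocity₁ (a b : ℂ) : ℂ :=
  -I * a - 2 * I * a * (((a * b).re : ℝ) : ℂ) - I * (((‖a‖ ^ 2 + ‖b‖ ^ 2 : ℝ)) : ℂ) * conj b

noncomputable def velocity₂ (a b : ℂ) : ℂ :=
  I * b - 2 * I * b * (((a * b).re : ℝ) : ℂ) - I * (((‖a‖ ^ 2 + ‖b‖ ^ 2 : ℝ)) : ℂ) * conj a

theorem velocity_mul_add_mul_velocity (a b : ℂ) :
    velocity₁ a b * b + a * velocity₂ a b =
      -I * (4 * (a * b) * (a * b).re + ((‖a‖ ^ 2 + ‖b‖ ^ 2 : ℝ) : ℂ) ^ 2) := by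
  have hb : conj b * b = ((‖b‖ ^ 2 : ℝ) : ℂ) := by rw [conj_mul']; push_cast; rfl
  have ha : a * conj a = ((‖a‖ ^ 2 : ℝ) : ℂ) := by rw [mul_conj']; push_cast; rfl
  calc velocity₁ a b * b + a * velocity₂ a b
      = -I * (4 * (a * b) * (a * b).re
          + ((‖a‖ ^ 2 + ‖b‖ ^ 2 : ℝ) : ℂ) * (conj b * b + a * conj a)) := by
        unfold velocity₁ velocity₂; ring
    _ = _ := by rw [ha, hb]; push_cast; ring

theorem im_velocity_mul_add_mul_velocity (a b : ℂ) :
    (velocity₁ a b * b + a * velocity₂ a b).im =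
      -4 * (a * b).re ^ 2 - (‖a‖ ^ 2 + ‖b‖ ^ 2) ^ 2 := by
  rw [velocity_mul_add_mul_velocity, neg_mul, neg_im, I_mul_im, ← ofReal_pow]
  simp only [add_re, mul_re, ofReal_re, ofReal_im, re_ofNat, im_ofNat]
  ring

end Moser

/-- **Moser's monotone quantity.**  Along any solution of the Hamiltonian system of
Moser's Hamiltonian `H(z₁,z₂) = ½(|z₁|² - |z₂|²) + (|z₁|² + |z₂|²)·Re(z₁z₂)`, namely
`ż₁ = -i z₁ - 2i z₁ Re(z₁z₂) - i(|z₁|² + |z₂|²) z̄₂` and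
`ż₂ =  i z₂ - 2i z₂ Re(z₁z₂) - i(|z₁|² + |z₂|²) z̄₁`,
the function `G = Im(z₁z₂)` satisfies
`d/dt Im(z₁z₂) = -4 (Re(z₁z₂))² - (|z₁|² + |z₂|²)²`, which is strictly negative
whenever `(z₁, z₂) ≠ (0, 0)`. -/
theorem moser_derivative_of_im
    (z₁ z₂ : ℝ → ℂ)
    (h₁ : ∀ t : ℝ, HasDerivAt z₁
      (-Complex.I * z₁ t - 2 * Complex.I * z₁ t * (((z₁ t * z₂ t).re : ℝ) : ℂ)
        - Complex.I * (((‖z₁ t‖ ^ 2 + ‖z₂ t‖ ^ 2 : ℝ)) : ℂ) * (starRingEnd ℂ) (z₂ t)) t)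
    (h₂ : ∀ t : ℝ, HasDerivAt z₂
      (Complex.I * z₂ t - 2 * Complex.I * z₂ t * (((z₁ t * z₂ t).re : ℝ) : ℂ)
        - Complex.I * (((‖z₁ t‖ ^ 2 + ‖z₂ t‖ ^ 2 : ℝ)) : ℂ) * (starRingEnd ℂ) (z₁ t)) t) :
    ∀ t : ℝ,
      HasDerivAt (fun s : ℝ => (z₁ s * z₂ s).im)
        (-4 * ((z₁ t * z₂ t).re) ^ 2 - (‖z₁ t‖ ^ 2 + ‖z₂ t‖ ^ 2) ^ 2) t ∧
      ((z₁ t, z₂ t) ≠ ((0 : ℂ), (0 : ℂ)) →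
        -4 * ((z₁ t * z₂ t).re) ^ 2 - (‖z₁ t‖ ^ 2 + ‖z₂ t‖ ^ 2) ^ 2 < 0) := by
  intro t
  refine ⟨?_, fun hne => ?_⟩
  · have hprod : HasDerivAt (fun s => z₁ s * z₂ s)
        (Moser.velocity₁ (z₁ t) (z₂ t) * z₂ t + z₁ t * Moser.velocity₂ (z₁ t) (z₂ t)) t :=
      (h₁ t).mul (h₂ t)
    rw [← Moser.im_velocity_mul_add_mul_velocity]
    exact imCLM.hasFDerivAt.comp_hasDerivAt t hprod
  · have hN := Complex.sq_norm_add_sq_norm_pos hne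
    nlinarith [sq_nonneg (z₁ t * z₂ t).re]
end

section
/- Consider Moser's Hamiltonian H : ℂ² → ℝ, H(z₁, z₂) = ½(|z₁|² − |z₂|²) + (|z₁|² + |z₂|²)·Re(z₁z₂), with Hamiltonian system ż₁ = −i z₁ − 2i z₁ Re(z₁z₂) − i(|z₁|² + |z₂|²) z̄₂ and ż₂ = i z₂ − 2i z₂ Re(z₁z₂) − i(|z₁|² + |z₂|²) z̄₁. Then every periodic solution of this system is constant, even though the linearized system at the origin, ż₁ = −i z₁, ż₂ = i z₂, has purely imaginary eigenvalues ±i and hence all of its nonzero solutions are nonconstant periodic orbits of period 2π. -/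
/-!
`Im(z₁z₂)` is a Lyapunov function for Moser's flow: its derivative along solutions is
`-(4 Re(z₁z₂)² + (|z₁|² + |z₂|²)²) ≤ 0`, vanishing only at the origin. Along a
periodic solution it is antitone and periodic, hence constant, so its derivative
vanishes and the solution stays at the origin. The linearized system is solved explicitly by
`w₁ = w₁(0) e^{-it}`, `w₂ = w₂(0) e^{it}`.
-/

open Complex Function

-- `ż_k = moserField_k (z₁, z₂)` is `ż_k = -2i ∂H/∂z̄_k` for Moser's Hamiltonian `H`.
noncomputable def moserField₁ (a b : ℂ) : ℂ :=
  -I * a - 2 * I * a * (((a * b).re : ℝ) : ℂ)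
    - I * (((‖a‖ ^ 2 + ‖b‖ ^ 2 : ℝ)) : ℂ) * starRingEnd ℂ b

noncomputable def moserField₂ (a b : ℂ) : ℂ :=
  I * b - 2 * I * b * (((a * b).re : ℝ) : ℂ)
    - I * (((‖a‖ ^ 2 + ‖b‖ ^ 2 : ℝ)) : ℂ) * starRingEnd ℂ a

lemma im_moserField₁_mul_add_mul_moserField₂ (a b : ℂ) :
    (moserField₁ a b * b + a * moserField₂ a b).im
      = -(4 * (a * b).re ^ 2 + (‖a‖ ^ 2 + ‖b‖ ^ 2) ^ 2) := by
  simp only [moserField₁, moserField₂, Complex.sq_norm, normSq_apply, mul_im, mul_re, add_im,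
    add_re, sub_im, sub_re, neg_im, neg_re, I_re, I_im, ofReal_re, ofReal_im, conj_re, conj_im,
    ofReal_add, re_ofNat, im_ofNat]
  ring

lemma hasDerivAt_im_mul_of_moser {z₁ z₂ : ℝ → ℂ} {t : ℝ}
    (h₁ : HasDerivAt z₁ (moserField₁ (z₁ t) (z₂ t)) t)
    (h₂ : HasDerivAt z₂ (moserField₂ (z₁ t) (z₂ t)) t) :
    HasDerivAt (fun s => (z₁ s * z₂ s).im)
      (-(4 * (z₁ t * z₂ t).re ^ 2 + (‖z₁ t‖ ^ 2 + ‖z₂ t‖ ^ 2) ^ 2)) t := by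
  rw [← im_moserField₁_mul_add_mul_moserField₂]
  exact imCLM.hasFDerivAt.comp_hasDerivAt t (h₁.mul h₂)

lemma HasDerivAt.eq_zero_of_forall_eq {𝕜 E : Type*} [NontriviallyNormedField 𝕜]
    [NormedAddCommGroup E] [NormedSpace 𝕜 E] {f : 𝕜 → E} {f' : E} {x : 𝕜} {a : E}
    (hf : HasDerivAt f f' x) (h : ∀ y, f y = a) : f' = 0 :=
  hf.unique (funext h ▸ hasDerivAt_const x a)

lemma Function.Periodic.eq_of_antitone {α : Type*} [PartialOrder α] {f : ℝ → α} {T : ℝ}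
    (hf : Periodic f T) (hT : 0 < T) (hanti : Antitone f) (s t : ℝ) : f s = f t := by
  wlog hst : s ≤ t generalizing s t
  · exact (this t s (le_of_not_ge hst)).symm
  obtain ⟨n, hn⟩ := exists_nat_ge ((t - s) / T)
  have htn : t ≤ s + n * T := by
    rw [div_le_iff₀ hT] at hn
    linarith
  exact le_antisymm (hf.nat_mul n s ▸ hanti htn) (hanti hst)

theorem moser_eq_zero_of_periodic {z₁ z₂ : ℝ → ℂ}
    (h₁ : ∀ t, HasDerivAt z₁ (moserField₁ (z₁ t) (z₂ t)) t)
    (h₂ : ∀ t, HasDerivAt z₂ (moserField₂ (z₁ t) (z₂ t)) t) {T : ℝ} (hT : 0 < T)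
    (hper : ∀ t, z₁ (t + T) = z₁ t ∧ z₂ (t + T) = z₂ t) (t : ℝ) :
    z₁ t = 0 ∧ z₂ t = 0 := by
  set b : ℝ → ℝ := fun s => (z₁ s * z₂ s).im
  have hb := fun s => hasDerivAt_im_mul_of_moser (h₁ s) (h₂ s)
  have hanti : Antitone b :=
    antitone_of_hasDerivAt_nonpos hb fun s => neg_nonpos.mpr (by positivity)
  have hbper : Periodic b T := fun s => by simp only [b, hper s]
  have hderiv := (hb t).eq_zero_of_forall_eq (hbper.eq_of_antitone hT hanti · t)
  have hnorm : ‖z₁ t‖ ^ 2 + ‖z₂ t‖ ^ 2 = 0 := by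
    nlinarith [sq_nonneg (z₁ t * z₂ t).re, sq_nonneg (‖z₁ t‖ ^ 2 + ‖z₂ t‖ ^ 2)]
  rw [add_eq_zero_iff_of_nonneg (by positivity) (by positivity)] at hnorm
  simpa using hnorm

section LinearODE

variable {c : ℂ} {w : ℝ → ℂ}

lemma eq_mul_cexp_of_hasDerivAt (hw : ∀ t, HasDerivAt w (c * w t) t) (t : ℝ) :
    w t = w 0 * exp (c * t) := by
  have hexp (s : ℝ) : HasDerivAt (fun s : ℝ => exp (-c * s)) (exp (-c * s) * -c) s :=
    (((hasDerivAt_id (s : ℂ)).const_mul (-c)).cexp).comp_ofReal.congr_deriv (by simp)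
  have hd (s : ℝ) : HasDerivAt (fun s : ℝ => w s * exp (-c * s)) 0 s :=
    ((hw s).mul (hexp s)).congr_deriv (by ring)
  have hconst := is_const_of_deriv_eq_zero (fun s => (hd s).differentiableAt)
    (fun s => (hd s).deriv) t 0
  simp only [ofReal_zero, mul_zero, exp_zero, mul_one] at hconst
  rw [← hconst, mul_assoc, ← exp_add, neg_mul, neg_add_cancel, exp_zero, mul_one]

lemma periodic_of_hasDerivAt_mul (hw : ∀ t, HasDerivAt w (c * w t) t) {T : ℝ}
    (hT : exp (c * T) = 1) : Periodic w T := fun t => by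
  rw [eq_mul_cexp_of_hasDerivAt hw, eq_mul_cexp_of_hasDerivAt hw t, ofReal_add, mul_add,
    exp_add, hT, mul_one]

lemma eq_zero_of_hasDerivAt_mul_of_forall_eq (hc : c ≠ 0) (hw : ∀ t, HasDerivAt w (c * w t) t)
    {a : ℂ} (h : ∀ t, w t = a) (t : ℝ) : w t = 0 :=
  (mul_eq_zero.mp ((hw t).eq_zero_of_forall_eq h)).resolve_left hc

end LinearODE

/-- **Moser's example: an overtwisted critical point without nonconstant periodic
orbits.**  Every periodic solution of the Hamiltonian system of Moser's Hamiltonian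
`H(z₁,z₂) = ½(|z₁|² - |z₂|²) + (|z₁|² + |z₂|²)·Re(z₁z₂)`, namely
`ż₁ = -i z₁ - 2i z₁ Re(z₁z₂) - i(|z₁|² + |z₂|²) z̄₂` and
`ż₂ =  i z₂ - 2i z₂ Re(z₁z₂) - i(|z₁|² + |z₂|²) z̄₁`,
is constant — even though for the linearized system at the origin,
`ż₁ = -i z₁`, `ż₂ = i z₂`, every solution that is not identically zero is a
nonconstant periodic orbit of period `2π`. -/
theorem moser_example_no_nonconstant_periodic_orbits :
    (∀ z₁ z₂ : ℝ → ℂ,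
      (∀ t : ℝ, HasDerivAt z₁
        (-Complex.I * z₁ t - 2 * Complex.I * z₁ t * (((z₁ t * z₂ t).re : ℝ) : ℂ)
          - Complex.I * (((‖z₁ t‖ ^ 2 + ‖z₂ t‖ ^ 2 : ℝ)) : ℂ) * (starRingEnd ℂ) (z₂ t)) t) →
      (∀ t : ℝ, HasDerivAt z₂
        (Complex.I * z₂ t - 2 * Complex.I * z₂ t * (((z₁ t * z₂ t).re : ℝ) : ℂ)
          - Complex.I * (((‖z₁ t‖ ^ 2 + ‖z₂ t‖ ^ 2 : ℝ)) : ℂ) * (starRingEnd ℂ) (z₁ t)) t) →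
      ∀ T : ℝ, 0 < T → (∀ t : ℝ, z₁ (t + T) = z₁ t ∧ z₂ (t + T) = z₂ t) →
      ∃ c₁ c₂ : ℂ, ∀ t : ℝ, z₁ t = c₁ ∧ z₂ t = c₂) ∧
    (∀ w₁ w₂ : ℝ → ℂ,
      (∀ t : ℝ, HasDerivAt w₁ (-Complex.I * w₁ t) t) →
      (∀ t : ℝ, HasDerivAt w₂ (Complex.I * w₂ t) t) →
      (w₁ 0, w₂ 0) ≠ ((0 : ℂ), (0 : ℂ)) →
      (∀ t : ℝ, w₁ (t + 2 * Real.pi) = w₁ t ∧ w₂ (t + 2 * Real.pi) = w₂ t) ∧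
      ¬ ∃ c₁ c₂ : ℂ, ∀ t : ℝ, w₁ t = c₁ ∧ w₂ t = c₂) := by
  refine ⟨fun z₁ z₂ h₁ h₂ T hT hper => ⟨0, 0, moser_eq_zero_of_periodic h₁ h₂ hT hper⟩,
    fun w₁ w₂ h₁ h₂ hne => ⟨fun t => ⟨?_, ?_⟩, ?_⟩⟩
  · refine periodic_of_hasDerivAt_mul h₁ ?_ t
    rw [show -I * ((2 * Real.pi : ℝ) : ℂ) = ((-1 : ℤ) : ℂ) * (2 * Real.pi * I) by
      push_cast; ring]
    exact exp_int_mul_two_pi_mul_I (-1)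
  · refine periodic_of_hasDerivAt_mul h₂ ?_ t
    rw [show I * ((2 * Real.pi : ℝ) : ℂ) = 2 * Real.pi * I by push_cast; ring]
    exact exp_two_pi_mul_I
  · rintro ⟨c₁, c₂, hc⟩
    exact hne (Prod.ext
      (eq_zero_of_hasDerivAt_mul_of_forall_eq (neg_ne_zero.mpr I_ne_zero) h₁ (hc · |>.1) 0)
      (eq_zero_of_hasDerivAt_mul_of_forall_eq I_ne_zero h₂ (hc · |>.2) 0))
end
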